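/- arXiv:1211.2841 — 4 statements merged into one kernel-verified Lean document; each statement's English description precedes it below -/
import Mathlib

section
/- Let P_n = Conv({±e_i : i ∈ [n]}) ⊂ ℝⁿ (the cross-polytope), let ψ assign a real weight to each vertex ±e_i, and set w_i = ψ(e_i) + ψ(−e_i). Assume w_1 ≤ w_2 ≤ ⋯ ≤ w_n. Then the regular subdivision of P_n induced by ψ (given by the lower convex hull of the lifted points) contains the internal edge from e_1 to −e_1 if and only if w_1 < w_2. -/
open Finset

/-- The 0/1 indicator vector `e_I ∈ ℝⁿ` of a subset `I ⊆ [n]`. -/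
def eInd {n : ℕ} (I : Finset (Fin n)) : Fin n → ℝ := fun i => if i ∈ I then 1 else 0

/-- The minimum of `f` over the finite set `s` is attained at least twice. -/
def MinTwiceOn {α : Type*} [DecidableEq α] (s : Finset α) (f : α → ℝ) : Prop :=
  ∃ a ∈ s, ∃ b ∈ s, a ≠ b ∧ f a = f b ∧ ∀ c ∈ s, f a ≤ f c

/-- The minimum of the three reals `a`, `b`, `c` is attained at least twice. -/
def ThreeMinTwice (a b c : ℝ) : Prop :=
  (a = b ∧ a ≤ c) ∨ (a = c ∧ a ≤ b) ∨ (b = c ∧ b ≤ a)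

/-- `x` is a tropical Plücker vector of rank `d` on `[n]`: for every `S` of size `d-2`
and distinct `i,j,k,l ∉ S`, the minimum of the three pairwise sums is attained twice. -/
def TropPlucker (n d : ℕ) (x : Finset (Fin n) → ℝ) : Prop :=
  ∀ (S : Finset (Fin n)) (i j k l : Fin n),
    S.card = d - 2 → i ∉ S → j ∉ S → k ∉ S → l ∉ S →
    i ≠ j → i ≠ k → i ≠ l → j ≠ k → j ≠ l → k ≠ l →
    ThreeMinTwice
      (x (S ∪ {i, j}) + x (S ∪ {k, l}))
      (x (S ∪ {i, k}) + x (S ∪ {j, l}))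
      (x (S ∪ {i, l}) + x (S ∪ {j, k}))

/-- The linear functional on `ℝⁿ` with covector `a`. -/
def lin {n : ℕ} (a : Fin n → ℝ) (z : Fin n → ℝ) : ℝ := ∑ i, a i * z i

/-- `[u,v]` is an edge of the polytope with (finite) vertex set `V`: some linear
functional attains its maximum over `V` exactly at `u` and `v`, `u ≠ v`. -/
def IsEdge {n : ℕ} (V : Set (Fin n → ℝ)) (u v : Fin n → ℝ) : Prop :=
  u ∈ V ∧ v ∈ V ∧ u ≠ v ∧
  ∃ a : Fin n → ℝ, (∀ z ∈ V, lin a z ≤ lin a u) ∧ lin a u = lin a v ∧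
    ∀ z ∈ V, lin a z = lin a u → z = u ∨ z = v

/-- `[u,v]` is a 1-cell of the regular subdivision of the polytope with vertex set `V`
induced by the weights `w`: some affine functional `z ↦ lin a z + c` is dominated by `w`
on `V` and touches `w` exactly at `u` and `v`, `u ≠ v`. -/
def IsCellEdge {n : ℕ} (V : Set (Fin n → ℝ)) (w : (Fin n → ℝ) → ℝ)
    (u v : Fin n → ℝ) : Prop :=
  u ∈ V ∧ v ∈ V ∧ u ≠ v ∧
  ∃ (a : Fin n → ℝ) (c : ℝ), (∀ z ∈ V, lin a z + c ≤ w z) ∧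
    lin a u + c = w u ∧ lin a v + c = w v ∧
    ∀ z ∈ V, lin a z + c = w z → z = u ∨ z = v

/-- The vertex set of `Δ(p,q;n)`: all indicator vectors `e_K` with `|K| ∈ {p,q}`. -/
def DeltaVerts (n p q : ℕ) : Set (Fin n → ℝ) :=
  {v | ∃ K : Finset (Fin n), (K.card = p ∨ K.card = q) ∧ v = eInd K}

/-- The vertex set of the face `Δ_{S,T}`: the vectors `e_{S∪{i}}` and `e_{T∖{i}}`
for `i ∈ T∖S`. -/
def DeltaSTVerts {n : ℕ} (S T : Finset (Fin n)) : Set (Fin n → ℝ) :=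
  {v | ∃ i ∈ T \ S, v = eInd (insert i S) ∨ v = eInd (T.erase i)}

/-- The vertex set of the cross-polytope `P_n`: `{±e_i : i ∈ [n]}`. -/
def CrossVerts (n : ℕ) : Set (Fin n → ℝ) :=
  {v | ∃ i : Fin n, v = eInd {i} ∨ v = -(eInd {i})}

/-- `M'` is a quotient of `M` (the matroids are concordant):
every flat of `M'` is a flat of `M`. -/
def MatroidQuotient {α : Type*} (M' M : Matroid α) : Prop :=
  ∀ F : Set α, M'.IsFlat F → M.IsFlat F

/-
The edge `[e_i, -e_i]` is a cell exactly when `i` is the unique minimiser of the pair weights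
`w_j = W(e_j) + W(-e_j)`. An affine function `ℓ` below `W` and touching it at `±e_i` has
`2 ℓ(0) = w_i`, and `ℓ(e_j) + ℓ(-e_j) = 2 ℓ(0) ≤ w_j` with equality only if `ℓ` touches `W` at
both `±e_j`. Conversely, the affine function with slope `(W(e_j) - W(-e_j))/2` in direction `j`
and value `w_i/2` at `0` lies below `W` by exactly `(w_j - w_i)/2` at both `±e_j`.
-/

lemma lin_eInd_singleton {n : ℕ} (a : Fin n → ℝ) (i : Fin n) : lin a (eInd {i}) = a i := by
  simp [lin, eInd]

lemma lin_neg_eInd_singleton {n : ℕ} (a : Fin n → ℝ) (i : Fin n) :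
    lin a (-(eInd {i})) = -a i := by
  simp [lin, eInd, mul_ite]

lemma eInd_singleton_injective {n : ℕ} : Function.Injective (fun i : Fin n => eInd {i}) := by
  intro i j h
  by_contra hij
  simpa [eInd, hij] using congrFun h i

lemma eInd_singleton_ne_neg {n : ℕ} (i j : Fin n) : eInd {i} ≠ -(eInd {j}) := by
  intro h
  have hi := congrFun h i
  by_cases hij : i = j
  · subst hij
    norm_num [eInd] at hi
  · simp [eInd, hij] at hi

def crossPairWeight {n : ℕ} (W : (Fin n → ℝ) → ℝ) (j : Fin n) : ℝ :=
  W (eInd {j}) + W (-(eInd {j}))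

theorem isCellEdge_crossVerts_iff {n : ℕ} (W : (Fin n → ℝ) → ℝ) (i : Fin n) :
    IsCellEdge (CrossVerts n) W (eInd {i}) (-(eInd {i})) ↔
      ∀ j ≠ i, crossPairWeight W i < crossPairWeight W j := by
  have pos_mem : ∀ j, eInd {j} ∈ CrossVerts n := fun j => ⟨j, Or.inl rfl⟩
  have neg_mem : ∀ j, -(eInd {j}) ∈ CrossVerts n := fun j => ⟨j, Or.inr rfl⟩
  constructor
  · rintro ⟨-, -, -, a, c, hle, hu, hv, honly⟩ j hji
    have strict : ∀ z ∈ CrossVerts n, z ≠ eInd {i} → z ≠ -(eInd {i}) → lin a z + c < W z :=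
      fun z hz hzu hzv => (hle z hz).lt_of_ne fun h => (honly z hz h).elim hzu hzv
    have hpos := strict _ (pos_mem j) (fun h => hji (eInd_singleton_injective h))
      (eInd_singleton_ne_neg j i)
    have hneg := strict _ (neg_mem j) (fun h => eInd_singleton_ne_neg i j h.symm)
      (fun h => hji (eInd_singleton_injective (neg_injective h)))
    simp only [lin_eInd_singleton, lin_neg_eInd_singleton] at hu hv hpos hneg
    unfold crossPairWeight
    linarith
  · intro hmin
    set a : Fin n → ℝ := fun j => (W (eInd {j}) - W (-(eInd {j}))) / 2
    set c := crossPairWeight W i / 2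
    have gap : ∀ j, ∀ z, (z = eInd {j} ∨ z = -(eInd {j})) →
        W z - (lin a z + c) = (crossPairWeight W j - crossPairWeight W i) / 2 := by
      rintro j z (rfl | rfl)
      all_goals
        simp only [lin_eInd_singleton, lin_neg_eInd_singleton, a, c, crossPairWeight]
        ring
    refine ⟨pos_mem i, neg_mem i, eInd_singleton_ne_neg i i, a, c, ?_, ?_, ?_, ?_⟩
    · rintro z ⟨j, hz⟩
      have := gap j z hz
      rcases eq_or_ne j i with rfl | hji
      · linarith
      · linarith [hmin j hji]
    · linarith [gap i _ (Or.inl rfl)]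
    · linarith [gap i _ (Or.inr rfl)]
    · rintro z ⟨j, hz⟩ htouch
      rcases eq_or_ne j i with rfl | hji
      · exact hz
      · linarith [gap j z hz, hmin j hji]

/-- for weights `ψ⁺, ψ⁻` on the vertices `±e_i` of the cross-polytope `P_n`
with `w_i = ψ⁺_i + ψ⁻_i` nondecreasing, the regular subdivision induced by the weights
contains the internal edge `[e_1, -e_1]` iff `w_1 < w_2`. -/
theorem statement2 (n : ℕ) (hn : 2 ≤ n) (ψp ψn : Fin n → ℝ)
    (hmono : ∀ i j : Fin n, i ≤ j → ψp i + ψn i ≤ ψp j + ψn j)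
    (W : (Fin n → ℝ) → ℝ)
    (hWp : ∀ i : Fin n, W (eInd {i}) = ψp i)
    (hWn : ∀ i : Fin n, W (-(eInd {i})) = ψn i) :
    IsCellEdge (CrossVerts n) W (eInd {⟨0, by omega⟩}) (-(eInd {⟨0, by omega⟩})) ↔
      ψp ⟨0, by omega⟩ + ψn ⟨0, by omega⟩ < ψp ⟨1, by omega⟩ + ψn ⟨1, by omega⟩ := by
  have hw : ∀ j, crossPairWeight W j = ψp j + ψn j := fun j => by
    rw [crossPairWeight, hWp, hWn]
  simp only [isCellEdge_crossVerts_iff, hw]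
  constructor
  · intro hmin
    exact hmin _ (by simp [Fin.ext_iff])
  · intro hlt j hj
    have h1j : (⟨1, by omega⟩ : Fin n) ≤ j := by
      rw [Fin.le_def]
      exact Nat.one_le_iff_ne_zero.mpr fun h => hj (Fin.ext h)
    exact hlt.trans_le (hmono _ _ h1j)
end

section
/- Let Δ(d,n) = Conv({e_{i₁}+⋯+e_{i_d} : {i₁,…,i_d} ∈ C([n],d)}) be the hypersimplex and Δ(p,q;n) = Conv(Δ(p,n) ∪ Δ(q,n)) with p ≤ q. For S, T ⊆ [n] with |S| = p−1, |T| = q+1, and S ⊆ T, the polytope Δ_{S,T} := Conv({e_{S∪{i}}, e_{T∖{i}} : i ∈ T∖S}) is a face of Δ(p,q;n); specifically, it is the set of points of Δ(p,q;n) maximizing the linear functional L(x) = Σ_{i∈S} x_i − Σ_{j∉T} x_j. -/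
open Finset

/-!
On a vertex `e_K`, the functional `L` equals `|S| - |S \ K| - |K \ T|`, so it is at most `|S|`,
with equality exactly when `S ⊆ K ⊆ T`. Since `|K| ∈ {p, q} = {|S| + 1, |T| - 1}`, these `K` are
the sets `S ∪ {i}` and `T \ {i}` with `i ∈ T \ S`. Finally, the maximizers of a linear functional
on a convex hull are the convex hull of its maximizing generators: a convex combination that puts
positive weight on a generator strictly below the maximum lies strictly below it.
-/

section Face

variable {𝕜 E : Type*} [Field 𝕜] [LinearOrder 𝕜] [IsStrictOrderedRing 𝕜]
  [AddCommGroup E] [Module 𝕜 E]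

theorem convexHull_sep_eq_setOf_forall_le (L : E →ₗ[𝕜] 𝕜) {V : Set E} {M : 𝕜}
    (hle : ∀ v ∈ V, L v ≤ M) (hM : ∃ v ∈ V, L v = M) :
    convexHull 𝕜 {v ∈ V | L v = M} =
      {x ∈ convexHull 𝕜 V | ∀ y ∈ convexHull 𝕜 V, L y ≤ L x} := by
  have hull_le : convexHull 𝕜 V ⊆ {x | L x ≤ M} :=
    convexHull_min hle (convex_halfSpace_le L.isLinear M)
  have hull_eq : convexHull 𝕜 {v ∈ V | L v = M} ⊆ {x | L x = M} :=
    convexHull_min (fun v hv => hv.2) (convex_hyperplane L.isLinear M)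
  have hF : {v ∈ V | L v = M}.Nonempty := hM
  obtain ⟨v₀, hv₀, hLv₀⟩ := hM
  refine Set.Subset.antisymm (fun x hx => ⟨convexHull_mono (Set.sep_subset _ _) hx,
    fun y hy => (hull_eq hx).symm ▸ hull_le hy⟩) ?_
  rintro x ⟨hx, hmax⟩
  have hLx : L x = M := le_antisymm (hull_le hx) (hLv₀ ▸ hmax v₀ (subset_convexHull 𝕜 V hv₀))
  have hV : V = {v ∈ V | L v = M} ∪ {v ∈ V | L v < M} := by
    ext v
    simp only [Set.mem_union, Set.mem_ofPred_eq, ← and_or_left]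
    exact ⟨fun hv => ⟨hv, (hle v hv).eq_or_lt⟩, And.left⟩
  rcases Set.eq_empty_or_nonempty {v ∈ V | L v < M} with hlt | hlt
  · rwa [hV, hlt, Set.union_empty] at hx
  rw [hV, convexHull_union hF hlt] at hx
  obtain ⟨y, hy, z, hz, a, b, ha, hb, hab, rfl⟩ := mem_convexJoin.1 hx
  -- the far end `z` lies strictly below `M`, so it must carry no weight
  have hLz : L z < M := convexHull_min (fun v hv => hv.2) (convex_halfSpace_lt L.isLinear M) hz
  have hLy : L y = M := hull_eq hy
  have hb0 : b = 0 := by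
    simp only [map_add, map_smul, smul_eq_mul, hLy] at hLx
    obtain rfl : a = 1 - b := eq_sub_of_add_eq hab
    refine le_antisymm (not_lt.1 fun hb' => ?_) hb
    nlinarith [mul_pos hb' (sub_pos.2 hLz)]
  obtain rfl : a = 1 := by linarith
  simpa [hb0] using hy

end Face

section Hypersimplex

variable {n : ℕ}

def faceFunctional (S T : Finset (Fin n)) : (Fin n → ℝ) →ₗ[ℝ] ℝ where
  toFun x := (∑ i ∈ S, x i) - ∑ j ∈ Tᶜ, x j
  map_add' x y := by simp only [Pi.add_apply, sum_add_distrib]; ring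
  map_smul' c x := by simp [mul_sum, mul_sub]

theorem faceFunctional_eInd (S T K : Finset (Fin n)) :
    faceFunctional S T (eInd K) = (#S : ℝ) - #(S \ K) - #(K \ T) := by
  have hS : (#(S ∩ K) : ℝ) + #(S \ K) = #S := mod_cast card_inter_add_card_sdiff S K
  simp only [faceFunctional, eInd, LinearMap.coe_mk, AddHom.coe_mk, sum_boole,
    filter_mem_eq_inter, ← hS, inter_comm Tᶜ, ← sdiff_eq_inter_compl]
  ring

theorem faceFunctional_eInd_le (S T K : Finset (Fin n)) :
    faceFunctional S T (eInd K) ≤ #S := by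
  rw [faceFunctional_eInd]
  linarith [(#(S \ K)).cast_nonneg (α := ℝ), (#(K \ T)).cast_nonneg (α := ℝ)]

theorem faceFunctional_eInd_eq_card_iff (S T K : Finset (Fin n)) :
    faceFunctional S T (eInd K) = #S ↔ S ⊆ K ∧ K ⊆ T := by
  rw [faceFunctional_eInd, ← sdiff_eq_empty_iff_subset, ← sdiff_eq_empty_iff_subset,
    ← card_eq_zero, ← card_eq_zero, sub_sub, sub_eq_self]
  norm_cast
  exact Nat.add_eq_zero_iff

theorem sep_deltaVerts_faceFunctional_eq {p q : ℕ} (hp : 1 ≤ p) {S T : Finset (Fin n)}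
    (hST : S ⊆ T) (hS : #S = p - 1) (hT : #T = q + 1) :
    {v ∈ DeltaVerts n p q | faceFunctional S T v = #S} = DeltaSTVerts S T := by
  ext v
  constructor
  · rintro ⟨⟨K, hK | hK, rfl⟩, hLK⟩ <;>
      obtain ⟨hSK, hKT⟩ := (faceFunctional_eInd_eq_card_iff S T K).1 hLK
    · obtain ⟨i, hiS, rfl⟩ := exists_eq_insert_iff.2 ⟨hSK, by omega⟩
      exact ⟨i, mem_sdiff.2 ⟨hKT (mem_insert_self i S), hiS⟩, Or.inl rfl⟩
    · obtain ⟨i, hiK, rfl⟩ := exists_eq_insert_iff.2 ⟨hKT, by omega⟩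
      refine ⟨i, mem_sdiff.2 ⟨mem_insert_self i K, fun hiS => hiK (hSK hiS)⟩, Or.inr ?_⟩
      rw [erase_insert hiK]
  · rintro ⟨i, hi, rfl | rfl⟩ <;> obtain ⟨hiT, hiS⟩ := mem_sdiff.1 hi
    · refine ⟨⟨insert i S, Or.inl (by rw [card_insert_of_notMem hiS]; omega), rfl⟩, ?_⟩
      exact (faceFunctional_eInd_eq_card_iff S T _).2 ⟨subset_insert i S, insert_subset hiT hST⟩
    · refine ⟨⟨T.erase i, Or.inr (by rw [card_erase_of_mem hiT]; omega), rfl⟩, ?_⟩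
      exact (faceFunctional_eInd_eq_card_iff S T _).2 ⟨subset_erase.2 ⟨hST, hiS⟩, erase_subset i T⟩

end Hypersimplex

/-- for `S ⊆ T` with `|S| = p-1`, `|T| = q+1`, the polytope
`Δ_{S,T} = Conv({e_{S∪{i}}, e_{T∖{i}} : i ∈ T∖S})` is the face of `Δ(p,q;n)` on which
the linear functional `L(x) = Σ_{i∈S} x_i − Σ_{j∉T} x_j` is maximized. -/
theorem statement4 (n p q : ℕ) (hp : 1 ≤ p) (hpq : p ≤ q)
    (S T : Finset (Fin n)) (hST : S ⊆ T) (hS : S.card = p - 1) (hT : T.card = q + 1) :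
    convexHull ℝ (DeltaSTVerts S T) =
      {x ∈ convexHull ℝ (DeltaVerts n p q) |
        ∀ y ∈ convexHull ℝ (DeltaVerts n p q),
          (∑ i ∈ S, y i) - (∑ j ∈ Tᶜ, y j) ≤ (∑ i ∈ S, x i) - (∑ j ∈ Tᶜ, x j)} := by
  have hverts := sep_deltaVerts_faceFunctional_eq hp hST hS hT
  obtain ⟨i, hi⟩ : (T \ S).Nonempty := by rw [← card_pos, card_sdiff_of_subset hST]; omega
  have hmax : eInd (insert i S) ∈ {v ∈ DeltaVerts n p q | faceFunctional S T v = #S} :=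
    hverts ▸ ⟨i, hi, Or.inl rfl⟩
  have hle : ∀ v ∈ DeltaVerts n p q, faceFunctional S T v ≤ #S := by
    rintro _ ⟨K, -, rfl⟩
    exact faceFunctional_eInd_le S T K
  rw [← hverts, convexHull_sep_eq_setOf_forall_le _ hle ⟨_, hmax⟩]
  rfl
end

section
/- Let x be a real-valued function on p-subsets of [n] and y a real-valued function on q-subsets of [n] (p ≤ q), and let S ⊆ T with |S| = p−1, |T| = q+1. Consider the regular subdivision of the face Δ_{S,T} induced by the weights w(e_{S∪{i}}) = x_{S∪{i}} and w(e_{T∖{i}}) = y_{T∖{i}}. This subdivision has the same 1-skeleton as Δ_{S,T} if and only if the minimum over i ∈ T∖S of x_{S∪{i}} + y_{T∖{i}} is attained at least twice. -/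
open Finset

/-!
`Δ_{S,T}` is a cross-polytope centred at `(e_S + e_T)/2`: `e_{S∪{k}} + e_{T∖{k}} = e_S + e_T` for
every `k ∈ T∖S`, and when `|T∖S| ≠ 2` an affine function can take arbitrary values `A_k` at the
points `e_{S∪{k}}`, subject only to taking `C - A_k` at the antipodal points `e_{T∖{k}}`. Hence the
edges of `Δ_{S,T}` are exactly the non-antipodal pairs. Writing `f_k = W(e_{S∪{k}}) + W(e_{T∖{k}})`,
the antipodal pair of `k` lifts to a 1-cell exactly when `k` is the unique minimiser of `f`: if
`f_j ≤ f_k` for some `j ≠ k`, an affine function below `W` touching `W` at both points of the pair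
of `k` must, by averaging, also touch `W` at the pair of `j`; while a unique minimiser `i` is
exposed by the affine function equal to `W - (f_k - f_i)/2` at both points of the pair of `k`.
When `p = q` the face is a segment, both pairs share its two endpoints, and both sides hold trivially.
-/

section

variable {n : ℕ}

lemma eInd_injective : Function.Injective (eInd : Finset (Fin n) → Fin n → ℝ) := by
  intro I J h
  ext k
  have hk := congrFun h k
  by_cases hI : k ∈ I <;> by_cases hJ : k ∈ J <;> simp_all [eInd]

lemma lin_eInd (a : Fin n → ℝ) (K : Finset (Fin n)) : lin a (eInd K) = ∑ k ∈ K, a k := by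
  simp [lin, eInd, mul_ite, sum_ite_mem]

lemma lin_add (a z z' : Fin n → ℝ) : lin a (z + z') = lin a z + lin a z' := by
  simp [lin, mul_add, sum_add_distrib]

lemma IsEdge.isCellEdge_zero {V : Set (Fin n → ℝ)} {u v : Fin n → ℝ} (h : IsEdge V u v) :
    IsCellEdge V 0 u v := by
  obtain ⟨hu, hv, huv, a, hle, heq, hex⟩ := h
  refine ⟨hu, hv, huv, a, -lin a u, fun z hz => ?_, by simp, by simp [heq], fun z hz hz' => ?_⟩
  · simpa using hle z hz
  · exact hex z hz (by simp only [Pi.zero_apply] at hz'; linarith)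

lemma isEdge_of_forall_eq_or_eq {V : Set (Fin n → ℝ)} {u v : Fin n → ℝ} (hu : u ∈ V) (hv : v ∈ V)
    (huv : u ≠ v) (hV : ∀ z ∈ V, z = u ∨ z = v) : IsEdge V u v :=
  ⟨hu, hv, huv, 0, by simp [lin], by simp [lin], fun z hz _ => hV z hz⟩

lemma not_isCellEdge_of_add_eq {V : Set (Fin n → ℝ)} {w : (Fin n → ℝ) → ℝ}
    {u v u' v' : Fin n → ℝ} (hu' : u' ∈ V) (hv' : v' ∈ V) (hu'u : u' ≠ u) (hu'v : u' ≠ v)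
    (hsum : u' + v' = u + v) (hw : w u' + w v' ≤ w u + w v) : ¬IsCellEdge V w u v := by
  rintro ⟨-, -, -, a, c, hle, hu, hv, hex⟩
  have hlin : lin a u' + lin a v' = lin a u + lin a v := by rw [← lin_add, ← lin_add, hsum]
  have hle' := hle v' hv'
  rcases hex u' hu' (le_antisymm (hle u' hu') (by linarith)) with h | h
  exacts [hu'u h, hu'v h]

lemma MinTwiceOn.congr_iff {α : Type*} [DecidableEq α] {s : Finset α} {f g : α → ℝ}
    (h : ∀ a ∈ s, f a = g a) : MinTwiceOn s f ↔ MinTwiceOn s g := by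
  have key : ∀ {f g : α → ℝ}, (∀ a ∈ s, f a = g a) → MinTwiceOn s f → MinTwiceOn s g := by
    rintro f g h ⟨a, ha, b, hb, hab, hfab, hmin⟩
    exact ⟨a, ha, b, hb, hab, by rw [← h a ha, ← h b hb, hfab],
      fun c hc => by rw [← h a ha, ← h c hc]; exact hmin c hc⟩
  exact ⟨key h, key fun a ha => (h a ha).symm⟩

lemma MinTwiceOn.exists_ne_le {α : Type*} [DecidableEq α] {s : Finset α} {f : α → ℝ}
    (h : MinTwiceOn s f) {i : α} (hi : i ∈ s) : ∃ k ∈ s, k ≠ i ∧ f k ≤ f i := by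
  obtain ⟨a, ha, b, hb, hab, hfab, hmin⟩ := h
  rcases eq_or_ne a i with rfl | hai
  exacts [⟨b, hb, hab.symm, hfab ▸ le_rfl⟩, ⟨a, ha, hai, hmin i hi⟩]

lemma exists_forall_lt_of_not_minTwiceOn {α : Type*} [DecidableEq α] {s : Finset α}
    {f : α → ℝ} (hs : s.Nonempty) (h : ¬MinTwiceOn s f) :
    ∃ i ∈ s, ∀ k ∈ s, k ≠ i → f i < f k := by
  obtain ⟨i, hi, hmin⟩ := exists_min_image s f hs
  exact ⟨i, hi, fun k hk hki =>
    (hmin k hk).lt_of_ne fun hik => h ⟨i, hi, k, hk, hki.symm, hik, hmin⟩⟩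

def stVert (S T : Finset (Fin n)) (k : Fin n) (b : Bool) : Fin n → ℝ :=
  eInd (cond b (insert k S) (T.erase k))

section stVert

variable {S T : Finset (Fin n)}

lemma mem_deltaSTVerts {z : Fin n → ℝ} :
    z ∈ DeltaSTVerts S T ↔ ∃ k ∈ T \ S, ∃ b, z = stVert S T k b := by
  simp only [DeltaSTVerts, stVert, Bool.exists_bool, cond_true, cond_false]
  grind

lemma stVert_mem {k : Fin n} (hk : k ∈ T \ S) (b : Bool) : stVert S T k b ∈ DeltaSTVerts S T :=
  mem_deltaSTVerts.2 ⟨k, hk, b, rfl⟩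

lemma stVert_add_stVert_not {k : Fin n} (hk : k ∈ T \ S) (b : Bool) :
    stVert S T k b + stVert S T k (!b) = eInd S + eInd T := by
  rw [mem_sdiff] at hk
  ext m
  cases b <;> by_cases hmk : m = k <;> by_cases hmS : m ∈ S <;> by_cases hmT : m ∈ T <;>
    simp_all [stVert, eInd]

lemma stVert_inj (hcard : #S + 2 < #T) {k k' : Fin n} (hk : k ∈ T \ S) {b b' : Bool} :
    stVert S T k b = stVert S T k' b' ↔ k = k' ∧ b = b' := by
  rw [mem_sdiff] at hk
  have hlt : #(insert k S) < #(T.erase k') :=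
    (card_insert_le k S).trans_lt (by have := pred_card_le_card_erase (s := T) (a := k'); omega)
  have hlt' : #(insert k' S) < #(T.erase k) :=
    (card_insert_le k' S).trans_lt (by have := pred_card_le_card_erase (s := T) (a := k); omega)
  cases b <;> cases b' <;>
    simp only [stVert, eInd_injective.eq_iff, cond_true, cond_false, erase_inj T hk.1,
      insert_inj hk.2, and_true, and_false, Bool.false_eq_true, Bool.true_eq_false,
      iff_false]
  · intro h; exact hlt'.ne (by rw [h])
  · intro h; exact hlt.ne (by rw [h])

lemma exists_affine_stVert (hST : S ⊆ T) (hD : #(T \ S) ≠ 2) (A : Fin n → ℝ) (C : ℝ) :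
    ∃ (a : Fin n → ℝ) (c : ℝ), ∀ k ∈ T \ S, ∀ b,
      lin a (stVert S T k b) + c = cond b (A k) (C - A k) := by
  -- With `a = A - c` on `T∖S`, the affine value at `e_{T∖{k}}` is `∑ A - (|T∖S| - 2) c - A k`,
  -- so `c` is determined by `C`.
  obtain ⟨c, hmc⟩ : ∃ c : ℝ, (#(T \ S) - 2 : ℝ) * c = (∑ k ∈ T \ S, A k) - C :=
    ⟨_, mul_div_cancel₀ _ (sub_ne_zero.2 (by exact_mod_cast hD))⟩
  set a : Fin n → ℝ := fun k => if k ∈ T \ S then A k - c else 0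
  have haS : ∑ k ∈ S, a k = 0 := sum_eq_zero fun k hk => if_neg (by simp [hk])
  have haT : ∑ k ∈ T, a k = (∑ k ∈ T \ S, A k) - #(T \ S) * c := by
    rw [← sum_sdiff hST, haS, add_zero, sum_ite_of_true (fun k hk => hk), sum_sub_distrib,
      sum_const, nsmul_eq_mul]
  refine ⟨a, c, fun k hk b => ?_⟩
  have hak : a k = A k - c := if_pos hk
  rw [mem_sdiff] at hk
  cases b
  · simp only [stVert, cond_false, lin_eInd]
    linear_combination sum_erase_add T a hk.1 + haT - hak - hmc
  · simp only [stVert, cond_true, lin_eInd, sum_insert hk.2, haS, hak]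
    ring

lemma card_sdiff_ne_two (hST : S ⊆ T) (hcard : #S + 2 < #T) : #(T \ S) ≠ 2 := by
  rw [card_sdiff_of_subset hST]; omega

lemma isEdge_stVert (hST : S ⊆ T) (hcard : #S + 2 < #T) {i j : Fin n} (hi : i ∈ T \ S)
    (hj : j ∈ T \ S) (hij : i ≠ j) (s t : Bool) :
    IsEdge (DeltaSTVerts S T) (stVert S T i s) (stVert S T j t) := by
  obtain ⟨a, c, ha⟩ := exists_affine_stVert hST (card_sdiff_ne_two hST hcard)
    (fun k => (if k = i then cond s 1 (-1) else 0) + (if k = j then cond t 1 (-1) else 0)) 0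
  have hval : ∀ k ∈ T \ S, ∀ b, lin a (stVert S T k b) + c ≤ 1 ∧
      (lin a (stVert S T k b) + c = 1 ↔ (k = i ∧ b = s) ∨ (k = j ∧ b = t)) := by
    intro k hk b
    rw [ha k hk b]
    by_cases hki : k = i <;> by_cases hkj : k = j <;> cases b <;> cases s <;> cases t <;>
      simp_all <;> norm_num
  have hvi := (hval i hi s).2.2 (.inl ⟨rfl, rfl⟩)
  refine ⟨stVert_mem hi s, stVert_mem hj t, fun h => hij ((stVert_inj hcard hi).1 h).1, a,
    fun z hz => ?_, ?_, fun z hz hz1 => ?_⟩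
  · obtain ⟨k, hk, b, rfl⟩ := mem_deltaSTVerts.1 hz
    linarith [(hval k hk b).1]
  · linarith [(hval j hj t).2.2 (.inr ⟨rfl, rfl⟩)]
  · obtain ⟨k, hk, b, rfl⟩ := mem_deltaSTVerts.1 hz
    rcases (hval k hk b).2.1 (by linarith) with ⟨rfl, rfl⟩ | ⟨rfl, rfl⟩
    exacts [.inl rfl, .inr rfl]

def pairWeight (S T : Finset (Fin n)) (W : (Fin n → ℝ) → ℝ) (k : Fin n) : ℝ :=
  W (stVert S T k true) + W (stVert S T k false)

lemma isCellEdge_stVert_of_forall_lt (hST : S ⊆ T) (hcard : #S + 2 < #T)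
    (W : (Fin n → ℝ) → ℝ) {i : Fin n} (hi : i ∈ T \ S)
    (hmin : ∀ k ∈ T \ S, k ≠ i → pairWeight S T W i < pairWeight S T W k) :
    IsCellEdge (DeltaSTVerts S T) W (stVert S T i true) (stVert S T i false) := by
  obtain ⟨a, c, ha⟩ := exists_affine_stVert hST (card_sdiff_ne_two hST hcard)
    (fun k => (W (stVert S T k true) - W (stVert S T k false) + pairWeight S T W i) / 2)
    (pairWeight S T W i)
  have hval : ∀ k ∈ T \ S, ∀ b, lin a (stVert S T k b) + c =
      W (stVert S T k b) - (pairWeight S T W k - pairWeight S T W i) / 2 := by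
    intro k hk b
    rw [ha k hk b]
    unfold pairWeight
    cases b <;> simp only [cond_true, cond_false] <;> ring
  have hle : ∀ k ∈ T \ S, pairWeight S T W i ≤ pairWeight S T W k := by
    intro k hk
    rcases eq_or_ne k i with rfl | hki
    exacts [le_rfl, (hmin k hk hki).le]
  refine ⟨stVert_mem hi true, stVert_mem hi false, by simp [stVert_inj hcard hi], a, c,
    fun z hz => ?_, by simp [hval i hi], by simp [hval i hi], fun z hz hzW => ?_⟩
  · obtain ⟨k, hk, b, rfl⟩ := mem_deltaSTVerts.1 hz
    linarith [hval k hk b, hle k hk]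
  · obtain ⟨k, hk, b, rfl⟩ := mem_deltaSTVerts.1 hz
    obtain rfl : k = i := by
      by_contra hki
      linarith [hval k hk b, hmin k hk hki]
    cases b
    exacts [.inr rfl, .inl rfl]

lemma not_isCellEdge_stVert_antipodal (hcard : #S + 2 < #T) (W : (Fin n → ℝ) → ℝ)
    {i j : Fin n} (hi : i ∈ T \ S) (hj : j ∈ T \ S) (hji : j ≠ i)
    (hw : pairWeight S T W j ≤ pairWeight S T W i) (s : Bool) :
    ¬IsCellEdge (DeltaSTVerts S T) W (stVert S T i s) (stVert S T i !s) := by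
  refine not_isCellEdge_of_add_eq (stVert_mem hj true) (stVert_mem hj false)
    (by simp [stVert_inj hcard hj, hji]) (by simp [stVert_inj hcard hj, hji]) ?_ ?_
  · rw [stVert_add_stVert_not hi, ← Bool.not_true, stVert_add_stVert_not hj]
  · cases s <;> simp only [pairWeight, Bool.not_true, Bool.not_false] at hw ⊢ <;> linarith

lemma not_isEdge_stVert_antipodal (hcard : #S + 2 < #T) {i j : Fin n} (hi : i ∈ T \ S)
    (hj : j ∈ T \ S) (hji : j ≠ i) :
    ¬IsEdge (DeltaSTVerts S T) (stVert S T i true) (stVert S T i false) := fun h =>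
  not_isCellEdge_stVert_antipodal hcard 0 hi hj hji (by simp [pairWeight]) true h.isCellEdge_zero

theorem forall_isCellEdge_imp_isEdge_iff_minTwiceOn (hST : S ⊆ T) (hcard : #S + 2 < #T)
    (W : (Fin n → ℝ) → ℝ) :
    (∀ u v, IsCellEdge (DeltaSTVerts S T) W u v → IsEdge (DeltaSTVerts S T) u v) ↔
      MinTwiceOn (T \ S) (pairWeight S T W) := by
  have hD : 2 < #(T \ S) := by rw [card_sdiff_of_subset hST]; omega
  constructor
  · intro hskel
    by_contra hnot
    obtain ⟨i, hi, hmin⟩ := exists_forall_lt_of_not_minTwiceOn (card_pos.1 (by omega)) hnot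
    obtain ⟨j, hj, hji⟩ := exists_mem_ne (by omega : 1 < #(T \ S)) i
    exact not_isEdge_stVert_antipodal hcard hi hj hji
      (hskel _ _ (isCellEdge_stVert_of_forall_lt hST hcard W hi hmin))
  · rintro hmin u v hcell
    obtain ⟨i, hi, s, rfl⟩ := mem_deltaSTVerts.1 hcell.1
    obtain ⟨j, hj, t, rfl⟩ := mem_deltaSTVerts.1 hcell.2.1
    rcases ne_or_eq i j with hij | rfl
    · exact isEdge_stVert hST hcard hi hj hij s t
    obtain rfl : t = !s := by
      have := hcell.2.2.1
      cases s <;> cases t <;> simp_all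
    obtain ⟨k, hk, hki, hw⟩ := hmin.exists_ne_le hi
    exact absurd hcell (not_isCellEdge_stVert_antipodal hcard W hi hk hki hw s)

lemma insert_eq_erase_of_sdiff_eq_pair (hST : S ⊆ T) {i j : Fin n} (hij : i ≠ j)
    (hD : T \ S = {i, j}) : insert i S = T.erase j := by
  ext k
  have hk := congrArg (k ∈ ·) hD
  simp only [mem_sdiff, mem_insert, mem_singleton, eq_iff_iff] at hk
  simp only [mem_insert, mem_erase]
  have := @hST k
  grind

lemma forall_isCellEdge_imp_isEdge_and_minTwiceOn_of_card_eq_two (hST : S ⊆ T)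
    (hD : #(T \ S) = 2) (W : (Fin n → ℝ) → ℝ) :
    (∀ u v, IsCellEdge (DeltaSTVerts S T) W u v → IsEdge (DeltaSTVerts S T) u v) ∧
      MinTwiceOn (T \ S) (pairWeight S T W) := by
  obtain ⟨i, j, hij, hDij⟩ := card_eq_two.1 hD
  have hi : stVert S T i true = stVert S T j false :=
    congrArg eInd (insert_eq_erase_of_sdiff_eq_pair hST hij hDij)
  have hj : stVert S T j true = stVert S T i false :=
    congrArg eInd (insert_eq_erase_of_sdiff_eq_pair hST hij.symm (by rw [hDij, pair_comm]))
  have hV : ∀ z ∈ DeltaSTVerts S T, z = stVert S T i true ∨ z = stVert S T j true := by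
    intro z hz
    obtain ⟨k, hk, b, rfl⟩ := mem_deltaSTVerts.1 hz
    rw [hDij, mem_insert, mem_singleton] at hk
    rcases hk with rfl | rfl <;> cases b <;> simp [hi, hj]
  have hw : pairWeight S T W i = pairWeight S T W j := by
    rw [pairWeight, pairWeight, hi, hj, add_comm]
  refine ⟨fun u v hcell => isEdge_of_forall_eq_or_eq hcell.1 hcell.2.1 hcell.2.2.1 fun z hz => ?_,
    i, by simp [hDij], j, by simp [hDij], hij, hw, fun k hk => ?_⟩
  · have := hcell.2.2.1
    rcases hV z hz with rfl | rfl <;> rcases hV u hcell.1 with rfl | rfl <;>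
      rcases hV v hcell.2.1 with rfl | rfl <;> simp_all
  · rw [hDij, mem_insert, mem_singleton] at hk
    rcases hk with rfl | rfl
    exacts [le_rfl, hw.le]

end stVert

end

/-- the regular subdivision of the face `Δ_{S,T}` induced by the weights
`e_{S∪{i}} ↦ x_{S∪{i}}`, `e_{T∖{i}} ↦ y_{T∖{i}}` has the same 1-skeleton as `Δ_{S,T}`
iff the minimum over `i ∈ T∖S` of `x_{S∪{i}} + y_{T∖{i}}` is attained at least twice. -/
theorem statement11 (n p q : ℕ) (hp : 1 ≤ p) (hpq : p ≤ q)
    (S T : Finset (Fin n)) (hST : S ⊆ T) (hS : S.card = p - 1) (hT : T.card = q + 1)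
    (x y : Finset (Fin n) → ℝ) (W : (Fin n → ℝ) → ℝ)
    (hWx : ∀ i ∈ T \ S, W (eInd (insert i S)) = x (insert i S))
    (hWy : ∀ i ∈ T \ S, W (eInd (T.erase i)) = y (T.erase i)) :
    (∀ u v, IsCellEdge (DeltaSTVerts S T) W u v → IsEdge (DeltaSTVerts S T) u v) ↔
      MinTwiceOn (T \ S) (fun i => x (insert i S) + y (T.erase i)) := by
  rw [MinTwiceOn.congr_iff (g := pairWeight S T W) fun k hk => by
    rw [← hWx k hk, ← hWy k hk]; rfl]
  rcases hpq.eq_or_lt with rfl | hlt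
  · have h := forall_isCellEdge_imp_isEdge_and_minTwiceOn_of_card_eq_two hST
      (by rw [card_sdiff_of_subset hST]; omega) W
    exact iff_of_true h.1 h.2
  · exact forall_isCellEdge_imp_isEdge_iff_minTwiceOn hST (by omega) W
end

section
/- Let M and M' be matroids on the finite ground set [n]. Then M' is a quotient of M in the flat-containment sense if and only if for every B ∈ B(M) and every i ∉ B there exists B' ∈ B(M') with B' ⊆ B such that {j : (B∪{i})∖{j} ∈ B(M)} ⊇ {j : (B'∪{i})∖{j} ∈ B(M')}. -/
open Finset

section Helpers
open Set

private lemma aux_closure_flat {α : Type*} (M : Matroid α) (X : Set α) :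
    M.IsFlat (M.closure X) := by
  have hne : Nonempty {F : Set α // M.IsFlat F ∧ X ∩ M.E ⊆ F} :=
    ⟨⟨M.E, M.ground_isFlat, Set.inter_subset_right⟩⟩
  have h := Matroid.IsFlat.iInter (M := M)
    (Fs := fun F : {F : Set α // M.IsFlat F ∧ X ∩ M.E ⊆ F} => F.1) (fun F => F.2.1)
  convert h using 1
  rw [Matroid.closure_def, Set.sInter_eq_iInter]
  rfl

private lemma aux_fund {α : Type*} {M : Matroid α} {B : Set α} {i : α}
    (hB : M.Indep B) (hfin : B.Finite) (hi : i ∈ M.closure B) :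
    i ∈ M.closure {j | j ∈ B ∧ i ∉ M.closure (B \ {j})} := by
  classical
  have hT : ∃ n, ∃ J, J ⊆ B ∧ J.ncard = n ∧ i ∈ M.closure J :=
    ⟨B.ncard, B, Subset.rfl, rfl, hi⟩
  obtain ⟨J, hJB, hJcard, hJcl⟩ := Nat.find_spec hT
  have hmin : ∀ J', J' ⊆ B → i ∈ M.closure J' → Nat.find hT ≤ J'.ncard := fun J' h1 h2 =>
    Nat.find_le ⟨J', h1, rfl, h2⟩
  have hJsub : J ⊆ {j | j ∈ B ∧ i ∉ M.closure (B \ {j})} := by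
    intro j hjJ
    refine ⟨hJB hjJ, fun hicl => ?_⟩
    have hJfin : J.Finite := hfin.subset hJB
    have hlt : (J \ {j}).ncard < Nat.find hT := by
      rw [← hJcard]; exact Set.ncard_diff_singleton_lt_of_mem hjJ hJfin
    have hni : i ∉ M.closure (J \ {j}) := fun hmem =>
      absurd (hmin _ (diff_subset.trans hJB) hmem) (not_le.mpr hlt)
    have hex : j ∈ M.closure (insert i (J \ {j})) := by
      have h2 : i ∈ M.closure (insert j (J \ {j})) \ M.closure (J \ {j}) := by
        rw [Set.insert_diff_singleton, Set.insert_eq_of_mem hjJ]; exact ⟨hJcl, hni⟩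
      exact (Matroid.closure_exchange h2).1
    have hj2 : j ∈ M.closure (B \ {j}) := by
      have h1 : M.closure (insert i (B \ {j})) = M.closure (B \ {j}) :=
        Matroid.closure_insert_eq_of_mem_closure hicl
      exact h1 ▸ M.closure_subset_closure
        (insert_subset_insert (diff_subset_diff_left hJB)) hex
    exact hB.notMem_closure_sdiff_of_mem (hJB hjJ) hj2
  exact M.closure_subset_closure hJsub hJcl

private lemma aux_swap {α : Type*} {M : Matroid α} {B : Set α} {i j : α} (hE : M.E = Set.univ)
    (hB : M.IsBase B) (hi : i ∉ B) (hj : j ∈ B) :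
    M.IsBase (insert i B \ {j}) ↔ i ∉ M.closure (B \ {j}) := by
  have hij : i ≠ j := fun e => hi (e ▸ hj)
  have hiBj : i ∉ B \ {j} := fun h => hi h.1
  rw [← Set.insert_diff_singleton_comm hij]
  constructor
  · intro hbase
    have hind := hbase.indep
    rw [(hB.indep.subset diff_subset).insert_indep_iff_of_notMem hiBj] at hind
    exact hind.2
  · intro hicl
    have hind : M.Indep (insert i (B \ {j})) :=
      ((hB.indep.subset diff_subset).insert_indep_iff_of_notMem hiBj).mpr
        ⟨by rw [hE]; trivial, hicl⟩
    exact hB.exchange_isBase_of_indep hi hind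

private lemma aux_mono {α : Type*} {M M' : Matroid α} (hE : M.E = Set.univ)
    (hE' : M'.E = Set.univ) (hQ : ∀ F : Set α, M'.IsFlat F → M.IsFlat F) (X : Set α) :
    M.closure X ⊆ M'.closure X := by
  rw [Matroid.closure_def, Matroid.closure_def]
  exact Set.sInter_subset_sInter fun F hF => ⟨hQ F hF.1, by rw [hE]; rw [hE'] at hF; exact hF.2⟩

end Helpers

open Set in
/-- for matroids `M`, `M'` on a finite ground set, the flat-containment
definition of quotient is equivalent to Brylawski's basis characterization: for every
basis `B` of `M` and `i ∉ B`, there is a basis `B' ⊆ B` of `M'` with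
`{j : B'∪{i}∖{j} ∈ B(M')} ⊆ {j : B∪{i}∖{j} ∈ B(M)}`. -/
theorem statement15 {α : Type*} [Fintype α] (M M' : Matroid α)
    (hE : M.E = Set.univ) (hE' : M'.E = Set.univ) :
    MatroidQuotient M' M ↔
      (∀ B : Set α, M.IsBase B → ∀ i ∉ B, ∃ B' : Set α, M'.IsBase B' ∧ B' ⊆ B ∧
        {j : α | M'.IsBase (insert i B' \ {j})} ⊆ {j : α | M.IsBase (insert i B \ {j})}) := by
  constructor
  · intro hQ B hB i hiB
    set K := {j | j ∈ B ∧ i ∉ M.closure (B \ {j})} with hKdef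
    have hiclK : i ∈ M.closure K :=
      aux_fund hB.indep (Set.toFinite B) (by rw [hB.closure_eq, hE]; trivial)
    have hiK' : i ∈ M'.closure K := aux_mono hE hE' hQ K hiclK
    have hKB : K ⊆ B := fun x hx => hx.1
    obtain ⟨I, hI⟩ := M'.exists_isBasis K (by rw [hE']; exact Set.subset_univ _)
    obtain ⟨B', hB'basis, hIB'⟩ := hI.indep.subset_isBasis_of_subset (hI.subset.trans hKB)
      (by rw [hE']; exact Set.subset_univ _)
    have hB'base : M'.IsBase B' := by
      refine hB'basis.indep.isBase_of_ground_subset_closure ?_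
      rw [hB'basis.closure_eq_closure, hE']
      intro x _
      exact aux_mono hE hE' hQ B (by rw [hB.closure_eq, hE]; trivial)
    refine ⟨B', hB'base, hB'basis.subset, ?_⟩
    intro j hj
    simp only [mem_setOf_eq] at hj ⊢
    by_cases hji : j = i
    · subst hji
      rw [Set.insert_diff_self_of_notMem hiB]
      exact hB
    have hiB' : i ∉ B' := fun h => hiB (hB'basis.subset h)
    have hjB' : j ∈ B' := by
      by_contra hjB'
      have heq : insert i B' \ {j} = insert i B' :=
        Set.diff_singleton_eq_self (by
          intro h
          rcases h with h | h
          · exact hji h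
          · exact hjB' h)
      rw [heq] at hj
      exact (hB'base.insert_dep ⟨by rw [hE']; trivial, hiB'⟩).not_indep hj.indep
    have hnotcl : i ∉ M'.closure (B' \ {j}) := (aux_swap hE' hB'base hiB' hjB').mp hj
    have hjK : j ∈ K := by
      by_contra hjK
      refine hnotcl (M'.closure_subset_closure
        (show I ⊆ B' \ {j} from fun x hx => ⟨hIB' hx, fun hxj => hjK (hxj ▸ hI.subset hx)⟩) ?_)
      rw [hI.closure_eq_closure]
      exact hiK'
    exact (aux_swap hE hB hiB (hKB hjK)).mpr hjK.2
  · intro h F hF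
    have hFE : F ⊆ M.E := by rw [hE]; exact Set.subset_univ _
    have hsub : M.closure F ⊆ F := by
      intro i hicl
      by_contra hiF
      obtain ⟨J, hJ⟩ := M.exists_isBasis F hFE
      have hiJ : i ∈ M.closure J := by rw [hJ.closure_eq_closure]; exact hicl
      obtain ⟨B, hBbase, hJB⟩ := hJ.indep.exists_isBase_superset
      have hiB : i ∉ B := by
        intro hiB
        have hiJ' : i ∉ J := fun hh => hiF (hJ.subset hh)
        have hind : M.Indep (insert i J) := hBbase.indep.subset (insert_subset hiB hJB)
        rw [hJ.indep.insert_indep_iff_of_notMem hiJ'] at hind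
        exact hind.2 hiJ
      obtain ⟨B', hB', hB'B, hsubset⟩ := h B hBbase i hiB
      have hiB' : i ∉ B' := fun hh => hiB (hB'B hh)
      have hicl' : i ∈ M'.closure {j | j ∈ B' ∧ i ∉ M'.closure (B' \ {j})} :=
        aux_fund hB'.indep (Set.toFinite B') (by rw [hB'.closure_eq, hE']; trivial)
      have hsubF : {j | j ∈ B' ∧ i ∉ M'.closure (B' \ {j})} ⊆ F := by
        intro j hjmem
        have h1 : M'.IsBase (insert i B' \ {j}) := (aux_swap hE' hB' hiB' hjmem.1).mpr hjmem.2
        have h2 : M.IsBase (insert i B \ {j}) := hsubset h1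
        have hjB : j ∈ B := hB'B hjmem.1
        have h3 : i ∉ M.closure (B \ {j}) := (aux_swap hE hBbase hiB hjB).mp h2
        by_contra hjF
        have hjJ : j ∉ J := fun hh => hjF (hJ.subset hh)
        exact h3 (M.closure_subset_closure
          (show J ⊆ B \ {j} from fun x hx => ⟨hJB hx, fun e => hjJ (e ▸ hx)⟩) hiJ)
      have : i ∈ M'.closure F := M'.closure_subset_closure hsubF hicl'
      rw [hF.closure] at this
      exact hiF this
    have hFeq : M.closure F = F := subset_antisymm hsub (M.subset_closure F hFE)
    rw [← hFeq]
    exact aux_closure_flat M F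
end
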